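/- The operator Δ^T Δ on symmetric hollow n×n matrices has exactly three eigenvalues: 0 with multiplicity 1 (eigenspace spanned by J = 11^T − I), n with multiplicity n−1, and 2(n−1) with multiplicity C(n,2) − n. -/
import Mathlib


open Matrix BigOperators Finset

noncomputable def QOp (n : ℕ) : Module.End ℝ (Matrix (Fin n) (Fin n) ℝ) where
  toFun D := Matrix.of fun i j =>
    if i = j then 0 else
      2 * ((n : ℝ) - 1) * D i j
        - ∑ k ∈ Finset.univ.filter (· ≠ i), D i k
        - ∑ k ∈ Finset.univ.filter (· ≠ j), D j k
  map_add' A B := by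
    ext i j
    by_cases h : i = j <;> simp [h, Matrix.add_apply, Finset.sum_add_distrib] <;> ring
  map_smul' c A := by
    ext i j
    by_cases h : i = j <;> simp [h, Matrix.smul_apply, Finset.mul_sum, Finset.sum_div] <;> ring_nf <;> simp [Finset.mul_sum]

/-- The space of symmetric hollow `n × n` real matrices. -/
def hollowSym (n : ℕ) : Submodule ℝ (Matrix (Fin n) (Fin n) ℝ) where
  carrier := {D | Dᵀ = D ∧ ∀ i, D i i = 0}
  add_mem' := by
    rintro A B ⟨hA, hA'⟩ ⟨hB, hB'⟩
    exact ⟨by rw [Matrix.transpose_add, hA, hB], fun i => by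
      simp [Matrix.add_apply, hA' i, hB' i]⟩
  zero_mem' := ⟨Matrix.transpose_zero, fun i => rfl⟩
  smul_mem' := by
    rintro c A ⟨hA, hA'⟩
    exact ⟨by rw [Matrix.transpose_smul, hA], fun i => by
      simp [Matrix.smul_apply, hA' i]⟩

namespace DTDAux

variable {n : ℕ}

lemma QOp_apply (D : Matrix (Fin n) (Fin n) ℝ) (hD : ∀ i, D i i = 0)
    {i j : Fin n} (hij : i ≠ j) :
    QOp n D i j = 2 * ((n : ℝ) - 1) * D i j - (∑ k, D i k) - (∑ k, D j k) := by
  have h : QOp n D i j = 2 * ((n : ℝ) - 1) * D i j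
        - ∑ k ∈ Finset.univ.filter (· ≠ i), D i k
        - ∑ k ∈ Finset.univ.filter (· ≠ j), D j k := by
    simp [QOp, hij]
  rw [h, Finset.filter_ne', Finset.filter_ne',
      Finset.sum_erase _ (hD i), Finset.sum_erase _ (hD j)]

lemma QOp_diag (D : Matrix (Fin n) (Fin n) ℝ) (i : Fin n) : QOp n D i i = 0 := by
  simp [QOp]

lemma exists_third (hn : 3 ≤ n) (a b : Fin n) : ∃ c : Fin n, c ≠ a ∧ c ≠ b := by
  have h : (({a, b} : Finset (Fin n))ᶜ).Nonempty := by
    rw [← Finset.card_pos, Finset.card_compl]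
    have hc : ({a, b} : Finset (Fin n)).card ≤ 2 :=
      (Finset.card_insert_le a {b}).trans (by simp)
    simp only [Fintype.card_fin]
    omega
  obtain ⟨c, hc⟩ := h
  simp only [Finset.mem_compl, Finset.mem_insert, Finset.mem_singleton, not_or] at hc
  exact ⟨c, hc.1, hc.2⟩

/-- Two distinct companions. -/
lemma exists_two (hn : 3 ≤ n) (a : Fin n) : ∃ b c : Fin n, b ≠ a ∧ c ≠ a ∧ b ≠ c := by
  obtain ⟨b, hb, -⟩ := exists_third hn a a
  obtain ⟨c, hc1, hc2⟩ := exists_third hn a b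
  exact ⟨b, c, hb, hc1, fun h => hc2 h.symm⟩

/-- If `x a + x b = 0` for all distinct `a b`, then `x = 0` (needs `n ≥ 3`). -/
lemma all_zero_of_pair_sums (hn : 3 ≤ n) (x : Fin n → ℝ)
    (h : ∀ a b : Fin n, a ≠ b → x a + x b = 0) : ∀ a, x a = 0 := by
  intro a
  obtain ⟨b, c, hb, hc, hbc⟩ := exists_two hn a
  have h1 := h a b (Ne.symm hb)
  have h2 := h a c (Ne.symm hc)
  have h3 := h b c hbc
  linarith

lemma eigen_rel (D : Matrix (Fin n) (Fin n) ℝ) (hD : ∀ i, D i i = 0) (μ : ℝ)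
    (h : QOp n D = μ • D) {i j : Fin n} (hij : i ≠ j) :
    (2 * ((n : ℝ) - 1) - μ) * D i j = (∑ k, D i k) + (∑ k, D j k) := by
  have h' : QOp n D i j = μ * D i j := by rw [h]; simp
  rw [QOp_apply D hD hij] at h'
  linarith

lemma eigen_rowsum (hn : 3 ≤ n) (D : Matrix (Fin n) (Fin n) ℝ)
    (hD : ∀ i, D i i = 0) (μ : ℝ) (h : QOp n D = μ • D) (i : Fin n) :
    ((n : ℝ) - μ) * (∑ k, D i k) = ∑ p, ∑ k, D p k := by
  have key : (2 * ((n : ℝ) - 1) - μ) * (∑ k, D i k)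
      = ∑ j ∈ Finset.univ.erase i, ((∑ k, D i k) + (∑ k, D j k)) := by
    rw [Finset.mul_sum]
    rw [← Finset.sum_erase (f := fun j => (2 * ((n : ℝ) - 1) - μ) * D i j)
      Finset.univ (a := i)
      (by show (2 * ((n : ℝ) - 1) - μ) * D i i = 0; rw [hD i]; ring)]
    refine Finset.sum_congr rfl fun j hj => ?_
    exact eigen_rel D hD μ h (Ne.symm (Finset.mem_erase.mp hj).1)
  rw [Finset.sum_add_distrib, Finset.sum_const,
    Finset.sum_erase_eq_sub (Finset.mem_univ i), Finset.card_erase_of_mem (Finset.mem_univ i),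
    Finset.card_univ, Fintype.card_fin] at key
  have hcast : ((n - 1 : ℕ) : ℝ) = (n : ℝ) - 1 := by
    have : 1 ≤ n := by omega
    push_cast [this]
    ring
  rw [nsmul_eq_mul, hcast] at key
  linarith

/-- Row-sum linear map. -/
noncomputable def rowSum (n : ℕ) : Matrix (Fin n) (Fin n) ℝ →ₗ[ℝ] (Fin n → ℝ) where
  toFun D := fun i => ∑ k, D i k
  map_add' A B := by ext i; simp [Finset.sum_add_distrib]
  map_smul' c A := by ext i; simp [Finset.mul_sum]

/-- The map sending `v` to the hollow symmetric matrix with entries `v i + v j`. -/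
noncomputable def phi (n : ℕ) : (Fin n → ℝ) →ₗ[ℝ] Matrix (Fin n) (Fin n) ℝ where
  toFun v := Matrix.of fun i j => if i = j then 0 else v i + v j
  map_add' A B := by
    ext i j
    by_cases h : i = j <;> simp [h] <;> ring
  map_smul' c A := by
    ext i j
    by_cases h : i = j <;> simp [h] <;> ring

lemma phi_apply (v : Fin n → ℝ) (i j : Fin n) :
    phi n v i j = if i = j then 0 else v i + v j := rfl

lemma phi_mem_hollow (v : Fin n → ℝ) : phi n v ∈ hollowSym n := by
  refine ⟨?_, fun i => by simp [phi_apply]⟩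
  ext i j
  simp only [Matrix.transpose_apply, phi_apply, eq_comm (a := j) (b := i)]
  by_cases h : i = j <;> simp [h] <;> ring

lemma rowSum_phi (v : Fin n → ℝ) (i : Fin n) :
    rowSum n (phi n v) i = ((n : ℝ) - 2) * v i + ∑ k, v k := by
  have h : ∀ k : Fin n, phi n v i k = (v i + v k) - (if i = k then v i + v k else 0) := by
    intro k
    rw [phi_apply]
    by_cases h : i = k <;> simp [h]
  show (∑ k, phi n v i k) = _
  rw [Finset.sum_congr rfl fun k _ => h k, Finset.sum_sub_distrib, Finset.sum_add_distrib,
    Finset.sum_const, Finset.sum_ite_eq, Finset.card_univ, Fintype.card_fin]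
  simp only [Finset.mem_univ, if_true, nsmul_eq_mul]
  ring

lemma phi_injective (hn : 3 ≤ n) : Function.Injective (phi n) := by
  rw [injective_iff_map_eq_zero]
  intro v hv
  funext a
  have h : ∀ p q : Fin n, p ≠ q → v p + v q = 0 := by
    intro p q hpq
    have := congrFun (congrFun hv p) q
    simpa [phi_apply, hpq] using this
  exact all_zero_of_pair_sums hn v h a

/-- The sum functional on `Fin n → ℝ`. -/
noncomputable def sumF (n : ℕ) : (Fin n → ℝ) →ₗ[ℝ] ℝ where
  toFun v := ∑ k, v k
  map_add' A B := by simp [Finset.sum_add_distrib]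
  map_smul' c A := by simp [Finset.mul_sum]

lemma finrank_ker_sumF (hn : 3 ≤ n) :
    Module.finrank ℝ (LinearMap.ker (sumF n)) = n - 1 := by
  have hsurj : Function.Surjective (sumF n) := by
    intro c
    have h0 : 0 < n := by omega
    refine ⟨Pi.single ⟨0, h0⟩ c, ?_⟩
    show (∑ k, Pi.single (⟨0, h0⟩ : Fin n) c k) = c
    simp
  have hrn := LinearMap.finrank_range_add_finrank_ker (sumF n)
  rw [LinearMap.range_eq_top.mpr hsurj, finrank_top, Module.finrank_self,
    Module.finrank_pi] at hrn
  simp only [Fintype.card_fin] at hrn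
  omega

/-- The equivalence of `hollowSym n` with functions on off-diagonal unordered pairs. -/
noncomputable def toPairs (n : ℕ) :
    hollowSym n →ₗ[ℝ] ({s : Sym2 (Fin n) // ¬ s.IsDiag} → ℝ) where
  toFun D s := Sym2.lift ⟨fun a b => (D : Matrix (Fin n) (Fin n) ℝ) a b,
    fun a b => by
      have := congrFun (congrFun D.2.1 b) a
      simpa using this⟩ s.1
  map_add' A B := by
    funext s
    obtain ⟨q, hq⟩ := s
    revert hq
    induction q using Sym2.ind with
    | _ a b => intro hq; simp [Sym2.lift_mk]
  map_smul' c A := by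
    funext s
    obtain ⟨q, hq⟩ := s
    revert hq
    induction q using Sym2.ind with
    | _ a b => intro hq; simp [Sym2.lift_mk]

lemma toPairs_bijective (n : ℕ) : Function.Bijective (toPairs n) := by
  constructor
  · rw [injective_iff_map_eq_zero]
    intro D hD
    ext1
    funext i j
    by_cases h : i = j
    · subst h; rw [D.2.2 i]; rfl
    · have := congrFun hD ⟨s(i, j), by simp [Sym2.mk_isDiag_iff, h]⟩
      simpa [toPairs, Sym2.lift_mk] using this
  · intro f
    refine ⟨⟨Matrix.of fun i j =>
      if h : i = j then 0 else f ⟨s(i, j), by simp [Sym2.mk_isDiag_iff, h]⟩, ?_, ?_⟩, ?_⟩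
    · ext i j
      simp only [Matrix.transpose_apply, Matrix.of_apply]
      by_cases h : i = j
      · simp [h]
      · rw [dif_neg (Ne.symm h), dif_neg h]
        exact congrArg f (Subtype.ext (Sym2.eq_swap))
    · intro i; simp
    · funext s
      obtain ⟨q, hq⟩ := s
      revert hq
      induction q using Sym2.ind with
      | _ a b =>
        intro hq
        have hab : a ≠ b := by simpa [Sym2.mk_isDiag_iff] using hq
        simp [toPairs, Sym2.lift_mk, dif_neg hab]

lemma finrank_hollowSym (n : ℕ) : Module.finrank ℝ (hollowSym n) = n.choose 2 := by
  rw [LinearEquiv.finrank_eq (LinearEquiv.ofBijective (toPairs n) (toPairs_bijective n)),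
    Module.finrank_pi, Sym2.card_subtype_not_diag, Fintype.card_fin]

end DTDAux

open DTDAux in
/-- The operator `Δᵀ Δ` on symmetric hollow matrices has exactly three eigenvalues:
`0` with eigenspace spanned by `J = 11ᵀ - I` (multiplicity 1), `n` with multiplicity
`n - 1`, and `2(n-1)` with multiplicity `C(n,2) - n`. -/
theorem deltaT_delta_eigenvalues (n : ℕ) (hn : 3 ≤ n) :
    (Module.End.eigenspace (QOp n) 0 ⊓ hollowSym n =
      Submodule.span ℝ {Matrix.of fun a b => if a = b then (0 : ℝ) else 1}) ∧
    Module.finrank ℝ ↥(Module.End.eigenspace (QOp n) (n : ℝ) ⊓ hollowSym n) = n - 1 ∧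
    Module.finrank ℝ
        ↥(Module.End.eigenspace (QOp n) (2 * ((n : ℝ) - 1)) ⊓ hollowSym n) =
      n.choose 2 - n ∧
    ∀ D ∈ hollowSym n, D ≠ 0 → ∀ μ : ℝ, QOp n D = μ • D →
      μ = 0 ∨ μ = (n : ℝ) ∨ μ = 2 * ((n : ℝ) - 1) := by
  have hn0 : (n : ℝ) ≠ 0 := by positivity
  have hn1 : (n : ℝ) - 1 ≠ 0 := by
    have : (3 : ℝ) ≤ n := by exact_mod_cast hn
    nlinarith
  have hn2 : (n : ℝ) - 2 ≠ 0 := by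
    have : (3 : ℝ) ≤ n := by exact_mod_cast hn
    nlinarith
  refine ⟨?_, ?_, ?_, ?_⟩
  · -- eigenvalue 0
    apply le_antisymm
    · intro D hD
      obtain ⟨h0, hmem⟩ := Submodule.mem_inf.mp hD
      rw [Module.End.mem_eigenspace_iff] at h0
      have hdiag := hmem.2
      have hrs := eigen_rowsum hn D hdiag 0 h0
      rw [Submodule.mem_span_singleton]
      refine ⟨(∑ p, ∑ k, D p k) / ((n : ℝ) * ((n : ℝ) - 1)), ?_⟩
      ext i j
      rw [Matrix.smul_apply, Matrix.of_apply]
      by_cases h : i = j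
      · simp [h, hdiag j]
      · rw [if_neg h, smul_eq_mul, mul_one]
        have hrel := eigen_rel D hdiag 0 h0 h
        have key : (n : ℝ) * ((n : ℝ) - 1) * D i j = ∑ p, ∑ k, D p k := by
          linear_combination ((n : ℝ) / 2) * hrel + (1 / 2) * hrs i + (1 / 2) * hrs j
        field_simp
        linarith [key]
    · rw [Submodule.span_le, Set.singleton_subset_iff]
      set J : Matrix (Fin n) (Fin n) ℝ := Matrix.of fun a b => if a = b then (0 : ℝ) else 1
        with hJ
      have hJdiag : ∀ i, J i i = 0 := fun i => by simp [hJ]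
      have hJrow : ∀ i : Fin n, (∑ k, J i k) = (n : ℝ) - 1 := by
        intro i
        have h : ∀ k : Fin n, J i k = 1 - (if i = k then 1 else 0) := by
          intro k
          by_cases h : i = k <;> simp [hJ, h]
        rw [Finset.sum_congr rfl fun k _ => h k, Finset.sum_sub_distrib, Finset.sum_const,
          Finset.sum_ite_eq, Finset.card_univ, Fintype.card_fin]
        simp
      refine Submodule.mem_inf.mpr ⟨?_, ?_, fun i => hJdiag i⟩
      · rw [Module.End.mem_eigenspace_iff]
        ext i j
        by_cases h : i = j
        · rw [h, QOp_diag]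
          simp [hJdiag j]
        · rw [QOp_apply J hJdiag h, hJrow i, hJrow j, Matrix.smul_apply]
          have : J i j = 1 := by simp [hJ, h]
          rw [this]
          simp
          ring
      · ext i j
        by_cases h : i = j
        · simp [hJ, h]
        · simp [hJ, Matrix.transpose_apply, h, Ne.symm h]
  · -- eigenvalue n
    have hEq : Module.End.eigenspace (QOp n) (n : ℝ) ⊓ hollowSym n
        = Submodule.map (phi n) (LinearMap.ker (sumF n)) := by
      apply le_antisymm
      · intro D hD
        obtain ⟨hE, hmem⟩ := Submodule.mem_inf.mp hD
        rw [Module.End.mem_eigenspace_iff] at hE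
        have hdiag := hmem.2
        have hrs := eigen_rowsum hn D hdiag (n : ℝ) hE
        have hs0 : (∑ p, ∑ k, D p k) = 0 := by
          have := hrs ⟨0, by omega⟩
          simpa using this.symm
        refine Submodule.mem_map.mpr ⟨fun i => (∑ k, D i k) / ((n : ℝ) - 2), ?_, ?_⟩
        · rw [LinearMap.mem_ker]
          show (∑ i, (∑ k, D i k) / ((n : ℝ) - 2)) = 0
          rw [← Finset.sum_div, hs0, zero_div]
        · ext i j
          rw [phi_apply]
          by_cases h : i = j
          · simp [h, hdiag j]
          · rw [if_neg h]
            have hrel := eigen_rel D hdiag (n : ℝ) hE h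
            field_simp
            linear_combination -hrel
      · rintro D ⟨v, hv, rfl⟩
        have hv0 : (∑ k, v k) = 0 := hv
        refine Submodule.mem_inf.mpr ⟨?_, phi_mem_hollow v⟩
        rw [Module.End.mem_eigenspace_iff]
        ext i j
        by_cases h : i = j
        · rw [h, QOp_diag, Matrix.smul_apply, phi_apply]
          simp
        · have h1 : (∑ k, phi n v i k) = ((n : ℝ) - 2) * v i := by
            have h' : rowSum n (phi n v) i = ((n : ℝ) - 2) * v i + ∑ k, v k := rowSum_phi v i
            rw [hv0, add_zero] at h'
            exact h'
          have h2 : (∑ k, phi n v j k) = ((n : ℝ) - 2) * v j := by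
            have h' : rowSum n (phi n v) j = ((n : ℝ) - 2) * v j + ∑ k, v k := rowSum_phi v j
            rw [hv0, add_zero] at h'
            exact h'
          rw [QOp_apply (phi n v) (fun a => by simp [phi_apply]) h, h1, h2,
            Matrix.smul_apply, phi_apply, if_neg h, smul_eq_mul]
          ring
    rw [hEq, ← LinearEquiv.finrank_eq
      (Submodule.equivMapOfInjective (phi n) (phi_injective hn) (LinearMap.ker (sumF n)))]
    exact finrank_ker_sumF hn
  · -- eigenvalue 2(n-1)
    set L : hollowSym n →ₗ[ℝ] (Fin n → ℝ) := (rowSum n).comp (hollowSym n).subtype with hL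
    have hEq : Module.End.eigenspace (QOp n) (2 * ((n : ℝ) - 1)) ⊓ hollowSym n
        = Submodule.map (hollowSym n).subtype (LinearMap.ker L) := by
      apply le_antisymm
      · intro D hD
        obtain ⟨hE, hmem⟩ := Submodule.mem_inf.mp hD
        rw [Module.End.mem_eigenspace_iff] at hE
        have hdiag := hmem.2
        refine Submodule.mem_map.mpr ⟨⟨D, hmem⟩, ?_, rfl⟩
        rw [LinearMap.mem_ker]
        funext i
        show (∑ k, D i k) = 0
        have hpair : ∀ a b : Fin n, a ≠ b →
            (∑ k, D a k) + (∑ k, D b k) = 0 := by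
          intro a b hab
          have := eigen_rel D hdiag _ hE hab
          simpa using this.symm
        exact all_zero_of_pair_sums hn _ hpair i
      · rintro D ⟨⟨D', hmem⟩, hker, rfl⟩
        refine Submodule.mem_inf.mpr ⟨?_, hmem⟩
        rw [Module.End.mem_eigenspace_iff]
        show (QOp n) D' = (2 * ((n : ℝ) - 1)) • D'
        have hr : ∀ i, (∑ k, D' i k) = 0 := fun i => congrFun hker i
        ext i j
        by_cases h : i = j
        · rw [h, QOp_diag, Matrix.smul_apply]
          simp [hmem.2 j]
        · rw [QOp_apply D' hmem.2 h, hr i, hr j, Matrix.smul_apply, smul_eq_mul]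
          ring
    have hsurjL : Function.Surjective L := by
      intro w
      set c : ℝ := (∑ k, w k) / (2 * ((n : ℝ) - 1)) with hc
      set v : Fin n → ℝ := fun i => (w i - c) / ((n : ℝ) - 2) with hv
      refine ⟨⟨phi n v, phi_mem_hollow v⟩, ?_⟩
      funext i
      show rowSum n (phi n v) i = w i
      rw [rowSum_phi]
      have hsv : (∑ k, v k) = ((∑ k, w k) - (n : ℝ) * c) / ((n : ℝ) - 2) := by
        simp only [hv]
        rw [← Finset.sum_div, Finset.sum_sub_distrib, Finset.sum_const, Finset.card_univ,
          Fintype.card_fin, nsmul_eq_mul]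
      rw [hsv]
      simp only [hv, hc]
      field_simp
      ring
    rw [hEq, Submodule.finrank_map_subtype_eq]
    have hrn := LinearMap.finrank_range_add_finrank_ker L
    rw [LinearMap.range_eq_top.mpr hsurjL, finrank_top, Module.finrank_pi,
      Fintype.card_fin, finrank_hollowSym n] at hrn
    have hle : n ≤ n.choose 2 := by
      rw [Nat.choose_two_right]
      refine (Nat.le_div_iff_mul_le (by norm_num)).mpr ?_
      have h1 : n * 2 ≤ n * (n - 1) := Nat.mul_le_mul_left n (by omega)
      omega
    omega
  · -- only eigenvalues
    rintro D ⟨hsym, hdiag⟩ hD0 μ hμ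
    by_contra hcon
    push_neg at hcon
    obtain ⟨h0, hN, h2⟩ := hcon
    apply hD0
    have hrs := eigen_rowsum hn D hdiag μ hμ
    have hne : (n : ℝ) - μ ≠ 0 := sub_ne_zero.mpr fun h => hN h.symm
    obtain ⟨i0⟩ : Nonempty (Fin n) := ⟨⟨0, by omega⟩⟩
    have hreq : ∀ i, (∑ k, D i k) = (∑ k, D i0 k) := fun i =>
      mul_left_cancel₀ hne (by rw [hrs i, hrs i0])
    have hsum : (∑ p, ∑ k, D p k) = (n : ℝ) * (∑ k, D i0 k) := by
      rw [Finset.sum_congr rfl fun p _ => hreq p, Finset.sum_const, Finset.card_univ,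
        Fintype.card_fin, nsmul_eq_mul]
    have hμ0 : μ * (∑ k, D i0 k) = 0 := by
      have h' := hrs i0
      rw [hsum] at h'
      linarith
    have hr0 : (∑ k, D i0 k) = 0 := by
      rcases mul_eq_zero.mp hμ0 with h | h
      · exact absurd h h0
      · exact h
    have hr : ∀ i, (∑ k, D i k) = 0 := fun i => (hreq i).trans hr0
    ext i j
    by_cases h : i = j
    · subst h; exact hdiag i
    · have := eigen_rel D hdiag μ hμ h
      rw [hr i, hr j] at this
      have hfac : 2 * ((n : ℝ) - 1) - μ ≠ 0 := sub_ne_zero.mpr fun hh => h2 hh.symm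
      have := mul_eq_zero.mp (by linarith : (2 * ((n : ℝ) - 1) - μ) * D i j = 0)
      rcases this with hh | hh
      · exact absurd hh hfac
      · exact hh
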